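/- Suppose there exist simple 4-(17,5,13), 4-(17,7,264) and 4-(17,8,320) designs, and simple 4-(18,5,14), 4-(18,7,336) and 4-(18,8,448) designs. Then there exists a simple 4-(35, 8, 15680) design (note 15680 = 448 × 35). -/

import Mathlib

/-!
Split the 35 points as `X ∪ Y` with `#X = 17`, `#Y = 18`, and take the blocks `b ∪ c`, `b ⊆ X`,
`c ⊆ Y`, with `(b, c)` running over the six products
`(X choose 0) × 4-(18,8,448)`, `(X choose 1) × 4-(18,7,336)`, `(X choose 3) × (Y choose 5)`,
`(X choose 5) × (Y choose 3)`, `4-(17,7,264) × (Y choose 1)`, `4-(17,8,320) × (Y choose 0)`.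
A 4-set meeting `X` in `a` points lies in `λ_a(D) * λ_{4-a}(E)` blocks of the product `D × E`,
where `λ_s` of a `t`-design is fixed by the double count `λ_s C(k-s, t-s) = λ C(v-s, t-s)`;
for every `a ≤ 4` the six products add up to 15680.
-/

/-- `SimpleDesignExists t v k lam` asserts the existence of a simple
`t-(v, k, lam)` design: a `v`-set `X` together with a set `B` of distinct
`k`-element subsets of `X` (blocks) such that every `t`-element subset of `X`
is contained in exactly `lam` blocks. -/
def SimpleDesignExists (t v k lam : ℕ) : Prop :=
  ∃ (X : Finset ℕ) (B : Finset (Finset ℕ)),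
    X.card = v ∧
    (∀ b ∈ B, b ⊆ X ∧ b.card = k) ∧
    (∀ T ⊆ X, T.card = t → (B.filter (fun b => T ⊆ b)).card = lam)

open Finset
open scoped FinsetFamily

variable {α β : Type*} [DecidableEq α] [DecidableEq β]

structure IsSimpleDesign (t k lam : ℕ) (X : Finset α) (B : Finset (Finset α)) : Prop where
  subset_powersetCard : B ⊆ X.powersetCard k
  card_filter_subset : ∀ T ⊆ X, #T = t → #{b ∈ B | T ⊆ b} = lam

theorem Finset.exists_perm_map_eq_of_card_eq {s t : Finset α} (h : #s = #t) :
    ∃ σ : Equiv.Perm α, s.map σ.toEmbedding = t := by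
  refine ⟨(s.equivOfCardEq h).extendSubtype, eq_of_subset_of_card_le ?_ (by simp [h])⟩
  intro y hy
  obtain ⟨x, hx, rfl⟩ := mem_map.1 hy
  exact Equiv.extendSubtype_mem _ x hx

theorem card_filter_powersetCard_subset_ite {S A : Finset α} (hA : A ⊆ S) (k : ℕ) :
    #{b ∈ S.powersetCard k | A ⊆ b} = if #A ≤ k then (#S - #A).choose (k - #A) else 0 := by
  split_ifs with hAk
  · exact card_filter_powersetCard_subset A S k hA hAk
  · refine card_eq_zero.2 (filter_eq_empty_iff.2 fun b hb hAb => hAk ?_)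
    exact (mem_powersetCard.1 hb).2 ▸ card_le_card hAb

namespace IsSimpleDesign

variable {t k lam : ℕ} {X : Finset α} {B : Finset (Finset α)}

theorem map (h : IsSimpleDesign t k lam X B) (f : α ↪ β) :
    IsSimpleDesign t k lam (X.map f) (B.map (mapEmbedding f).toEmbedding) where
  subset_powersetCard := by
    rw [powersetCard_map]
    exact map_subset_map.2 h.subset_powersetCard
  card_filter_subset T hT hTt := by
    obtain ⟨T, hTX, rfl⟩ := subset_map_iff.1 hT
    rw [filter_map, card_map]
    simpa [Function.comp_def] using h.card_filter_subset T hTX (by simpa using hTt)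

-- Double count the pairs `(b, T)` with `b ∈ B`, `#T = t` and `A ⊆ T ⊆ b`.
theorem card_filter_subset_mul_choose (h : IsSimpleDesign t k lam X B) {A : Finset α}
    (hAX : A ⊆ X) (hAt : #A ≤ t) :
    #{b ∈ B | A ⊆ b} * (k - #A).choose (t - #A) = (#X - #A).choose (t - #A) * lam := by
  rw [← card_filter_powersetCard_subset A X t hAX hAt]
  refine card_mul_eq_card_mul (fun b T => T ⊆ b) (fun b hb => ?_) (fun T hT => ?_)
  · obtain ⟨hB, hAb⟩ := mem_filter.1 hb
    obtain ⟨hbX, hbk⟩ := mem_powersetCard.1 (h.subset_powersetCard hB)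
    rw [← hbk, ← card_filter_powersetCard_subset A b t hAb hAt]
    congr 1
    ext T
    simp only [mem_bipartiteAbove, mem_filter, mem_powersetCard]
    exact ⟨fun ⟨⟨⟨_, hT⟩, hAT⟩, hTb⟩ => ⟨⟨hTb, hT⟩, hAT⟩,
      fun ⟨⟨hTb, hT⟩, hAT⟩ => ⟨⟨⟨hTb.trans hbX, hT⟩, hAT⟩, hTb⟩⟩
  · obtain ⟨hT, hAT⟩ := mem_filter.1 hT
    obtain ⟨hTX, hTt⟩ := mem_powersetCard.1 hT
    rw [← h.card_filter_subset T hTX hTt]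
    congr 1
    ext b
    simp only [mem_bipartiteBelow, mem_filter]
    exact ⟨fun ⟨⟨hb, _⟩, hTb⟩ => ⟨hb, hTb⟩, fun ⟨hb, hTb⟩ => ⟨⟨hb, hAT.trans hTb⟩, hTb⟩⟩

theorem card_filter_subset_eq (h : IsSimpleDesign t k lam X B) {A : Finset α}
    (hAX : A ⊆ X) (hAt : #A ≤ t) (htk : t ≤ k) :
    #{b ∈ B | A ⊆ b} = (#X - #A).choose (t - #A) * lam / (k - #A).choose (t - #A) := by
  rw [← h.card_filter_subset_mul_choose hAX hAt, Nat.mul_div_cancel]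
  exact Nat.choose_pos (by omega)

end IsSimpleDesign

section Sups

variable {X Y : Finset α} {F G : Finset (Finset α)}

theorem union_inter_eq_left_of_disjoint (hXY : Disjoint X Y) {b c : Finset α} (hb : b ⊆ X)
    (hc : c ⊆ Y) : (b ∪ c) ∩ X = b := by
  rw [union_inter_distrib_right, inter_eq_left.2 hb,
    disjoint_iff_inter_eq_empty.1 (hXY.symm.mono_left hc), union_empty]

theorem subset_union_iff_of_disjoint (hXY : Disjoint X Y) {b c T : Finset α} (hb : b ⊆ X)
    (hc : c ⊆ Y) (hT : T ⊆ X ∪ Y) : T ⊆ b ∪ c ↔ T ∩ X ⊆ b ∧ T ∩ Y ⊆ c := by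
  refine ⟨fun h => ⟨?_, ?_⟩, fun h => ?_⟩
  · simpa only [union_inter_eq_left_of_disjoint hXY hb hc]
      using inter_subset_inter h (Subset.refl X)
  · simpa only [union_comm b, union_inter_eq_left_of_disjoint hXY.symm hc hb]
      using inter_subset_inter h (Subset.refl Y)
  · rw [← inter_eq_left.2 hT, inter_union_distrib_left]
    exact union_subset_union h.1 h.2

theorem card_sups_of_disjoint (hXY : Disjoint X Y) (hF : ∀ b ∈ F, b ⊆ X)
    (hG : ∀ c ∈ G, c ⊆ Y) : #(F ⊻ G) = #F * #G := by
  refine card_image₂_iff.2 fun p hp q hq hpq => ?_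
  simp only [Set.mem_prod, mem_coe] at hp hq
  have h : p.1 ∪ p.2 = q.1 ∪ q.2 := hpq
  refine Prod.ext ?_ ?_
  · rw [← union_inter_eq_left_of_disjoint hXY (hF _ hp.1) (hG _ hp.2),
      ← union_inter_eq_left_of_disjoint hXY (hF _ hq.1) (hG _ hq.2), h]
  · rw [← union_inter_eq_left_of_disjoint hXY.symm (hG _ hp.2) (hF _ hp.1),
      ← union_inter_eq_left_of_disjoint hXY.symm (hG _ hq.2) (hF _ hq.1), union_comm, h,
      union_comm]

theorem card_filter_subset_sups (hXY : Disjoint X Y) (hF : ∀ b ∈ F, b ⊆ X)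
    (hG : ∀ c ∈ G, c ⊆ Y) {T : Finset α} (hT : T ⊆ X ∪ Y) :
    #{d ∈ F ⊻ G | T ⊆ d} = #{b ∈ F | T ∩ X ⊆ b} * #{c ∈ G | T ∩ Y ⊆ c} := by
  have h : {d ∈ F ⊻ G | T ⊆ d} = {b ∈ F | T ∩ X ⊆ b} ⊻ {c ∈ G | T ∩ Y ⊆ c} := by
    ext d
    simp only [mem_filter, mem_sups, sup_eq_union]
    constructor
    · rintro ⟨⟨b, hb, c, hc, rfl⟩, hTd⟩
      have := (subset_union_iff_of_disjoint hXY (hF b hb) (hG c hc) hT).1 hTd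
      exact ⟨b, ⟨hb, this.1⟩, c, ⟨hc, this.2⟩, rfl⟩
    · rintro ⟨b, ⟨hb, hTb⟩, c, ⟨hc, hTc⟩, rfl⟩
      exact ⟨⟨b, hb, c, hc, rfl⟩,
        (subset_union_iff_of_disjoint hXY (hF b hb) (hG c hc) hT).2 ⟨hTb, hTc⟩⟩
  rw [h, card_sups_of_disjoint hXY (fun b hb => hF b (mem_filter.1 hb).1)
    (fun c hc => hG c (mem_filter.1 hc).1)]

theorem inter_mem_of_mem_sups (hXY : Disjoint X Y) (hF : ∀ b ∈ F, b ⊆ X)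
    (hG : ∀ c ∈ G, c ⊆ Y) {d : Finset α} (hd : d ∈ F ⊻ G) : d ∩ X ∈ F := by
  obtain ⟨b, hb, c, hc, rfl⟩ := mem_sups.1 hd
  rwa [sup_eq_union, union_inter_eq_left_of_disjoint hXY (hF b hb) (hG c hc)]

end Sups

section Layers

variable {X Y : Finset α} {I : Finset ℕ} {F G : ℕ → Finset (Finset α)}

theorem card_filter_subset_biUnion_sups (hXY : Disjoint X Y)
    (hF : ∀ i ∈ I, F i ⊆ X.powersetCard i) (hG : ∀ i ∈ I, ∀ c ∈ G i, c ⊆ Y)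
    {T : Finset α} (hT : T ⊆ X ∪ Y) :
    #{d ∈ I.biUnion (fun i => F i ⊻ G i) | T ⊆ d}
      = ∑ i ∈ I, #{b ∈ F i | T ∩ X ⊆ b} * #{c ∈ G i | T ∩ Y ⊆ c} := by
  have hFX : ∀ i ∈ I, ∀ b ∈ F i, b ⊆ X := fun i hi b hb =>
    (mem_powersetCard.1 (hF i hi hb)).1
  rw [filter_biUnion, card_biUnion]
  · exact sum_congr rfl fun i hi => card_filter_subset_sups hXY (hFX i hi) (hG i hi) hT
  · intro i hi j hj hij
    refine disjoint_left.2 fun d hdi hdj => hij ?_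
    have hX : ∀ i ∈ I, d ∈ F i ⊻ G i → #(d ∩ X) = i := fun i hi hd =>
      (mem_powersetCard.1 (hF i hi (inter_mem_of_mem_sups hXY (hFX i hi) (hG i hi) hd))).2
    rw [← hX i hi (mem_filter.1 hdi).1, hX j hj (mem_filter.1 hdj).1]

theorem IsSimpleDesign.biUnion_sups {t k lam : ℕ} (hXY : Disjoint X Y)
    (hF : ∀ i ∈ I, F i ⊆ X.powersetCard i) (hG : ∀ i ∈ I, G i ⊆ Y.powersetCard (k - i))
    (hIk : ∀ i ∈ I, i ≤ k)
    (hdeg : ∀ T ⊆ X ∪ Y, #T = t →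
      ∑ i ∈ I, #{b ∈ F i | T ∩ X ⊆ b} * #{c ∈ G i | T ∩ Y ⊆ c} = lam) :
    IsSimpleDesign t k lam (X ∪ Y) (I.biUnion fun i => F i ⊻ G i) where
  subset_powersetCard d hd := by
    obtain ⟨i, hi, b, hb, c, hc, rfl⟩ := by simpa only [mem_biUnion, mem_sups] using hd
    obtain ⟨hbX, hbi⟩ := mem_powersetCard.1 (hF i hi hb)
    obtain ⟨hcY, hci⟩ := mem_powersetCard.1 (hG i hi hc)
    rw [mem_powersetCard, sup_eq_union, card_union_of_disjoint (hXY.mono hbX hcY), hbi, hci]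
    exact ⟨union_subset_union hbX hcY, Nat.add_sub_cancel' (hIk i hi)⟩
  card_filter_subset T hT hTt := by
    rw [card_filter_subset_biUnion_sups hXY hF
      (fun i hi c hc => (mem_powersetCard.1 (hG i hi hc)).1) hT]
    exact hdeg T hT hTt

end Layers

theorem SimpleDesignExists.exists_isSimpleDesign {t v k lam : ℕ}
    (h : SimpleDesignExists t v k lam) {X : Finset ℕ} (hX : #X = v) :
    ∃ B, IsSimpleDesign t k lam X B := by
  obtain ⟨X₀, B₀, hX₀, hB₀, hdeg⟩ := h
  obtain ⟨σ, hσ⟩ := exists_perm_map_eq_of_card_eq (hX₀.trans hX.symm)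
  exact ⟨_, hσ ▸ IsSimpleDesign.map ⟨fun b hb => mem_powersetCard.2 (hB₀ b hb), hdeg⟩
    σ.toEmbedding⟩

theorem IsSimpleDesign.simpleDesignExists {t k lam : ℕ} {X : Finset ℕ} {B : Finset (Finset ℕ)}
    (h : IsSimpleDesign t k lam X B) : SimpleDesignExists t #X k lam :=
  ⟨X, B, rfl, fun _ hb => mem_powersetCard.1 (h.subset_powersetCard hb), h.card_filter_subset⟩

theorem exists_isSimpleDesign_4_8_15680 {X Y : Finset α} (hXY : Disjoint X Y) (hX : #X = 17)
    (hY : #Y = 18) {B₇ B₈ C₇ C₈ : Finset (Finset α)}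
    (hB₇ : IsSimpleDesign 4 7 264 X B₇) (hB₈ : IsSimpleDesign 4 8 320 X B₈)
    (hC₇ : IsSimpleDesign 4 7 336 Y C₇) (hC₈ : IsSimpleDesign 4 8 448 Y C₈) :
    ∃ B, IsSimpleDesign 4 8 15680 (X ∪ Y) B := by
  let F : ℕ → Finset (Finset α) := fun i =>
    if i = 7 then B₇ else if i = 8 then B₈ else X.powersetCard i
  let G : ℕ → Finset (Finset α) := fun i =>
    if i = 0 then C₈ else if i = 1 then C₇ else Y.powersetCard (8 - i)
  refine ⟨_, IsSimpleDesign.biUnion_sups (I := {0, 1, 3, 5, 7, 8}) (F := F) (G := G) hXY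
    ?_ ?_ (by simp) ?_⟩
  · simp only [mem_insert, mem_singleton]
    rintro i (rfl | rfl | rfl | rfl | rfl | rfl) <;> simp only [F, Nat.reduceEqDiff, ↓reduceIte]
    exacts [subset_rfl, subset_rfl, subset_rfl, subset_rfl, hB₇.subset_powersetCard,
      hB₈.subset_powersetCard]
  · simp only [mem_insert, mem_singleton]
    rintro i (rfl | rfl | rfl | rfl | rfl | rfl) <;> simp only [G, Nat.reduceEqDiff, ↓reduceIte]
    exacts [hC₈.subset_powersetCard, hC₇.subset_powersetCard, subset_rfl, subset_rfl, subset_rfl,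
      subset_rfl]
  · intro T hT hT4
    have hAC : #(T ∩ X) + #(T ∩ Y) = 4 := by
      rw [← card_union_of_disjoint (hXY.mono inter_subset_right inter_subset_right),
        ← inter_union_distrib_left, inter_eq_left.2 hT, hT4]
    have hA4 : #(T ∩ X) ≤ 4 := by omega
    have hC4 : #(T ∩ Y) ≤ 4 := by omega
    rw [sum_insert (by decide), sum_insert (by decide), sum_insert (by decide),
      sum_insert (by decide), sum_insert (by decide), sum_singleton]
    simp only [F, G, Nat.reduceEqDiff, ↓reduceIte]
    rw [hB₇.card_filter_subset_eq inter_subset_right hA4 (by norm_num),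
      hB₈.card_filter_subset_eq inter_subset_right hA4 (by norm_num),
      hC₇.card_filter_subset_eq inter_subset_right hC4 (by norm_num),
      hC₈.card_filter_subset_eq inter_subset_right hC4 (by norm_num)]
    simp only [card_filter_powersetCard_subset_ite inter_subset_right, hX, hY]
    rw [show #(T ∩ Y) = 4 - #(T ∩ X) by omega]
    generalize #(T ∩ X) = a at hA4 ⊢
    interval_cases a <;> rfl

theorem designExists_4_35_8_general
    (h2 : SimpleDesignExists 4 17 7 264)
    (h3 : SimpleDesignExists 4 17 8 320)
    (h5 : SimpleDesignExists 4 18 7 336)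
    (h6 : SimpleDesignExists 4 18 8 448)
    : SimpleDesignExists 4 35 8 15680 := by
  have hXY : Disjoint (range 17) (Ico 17 35) := by
    simpa only [range_eq_Ico] using Ico_disjoint_Ico_consecutive 0 17 35
  have hX : #(range 17) = 17 := card_range 17
  have hY : #(Ico 17 35) = 18 := Nat.card_Ico 17 35
  obtain ⟨B₇, hB₇⟩ := h2.exists_isSimpleDesign hX
  obtain ⟨B₈, hB₈⟩ := h3.exists_isSimpleDesign hX
  obtain ⟨C₇, hC₇⟩ := h5.exists_isSimpleDesign hY
  obtain ⟨C₈, hC₈⟩ := h6.exists_isSimpleDesign hY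
  obtain ⟨B, hB⟩ := exists_isSimpleDesign_4_8_15680 hXY hX hY hB₇ hB₈ hC₇ hC₈
  simpa only [card_union_of_disjoint hXY, hX, hY] using hB.simpleDesignExists

theorem designExists_4_35_8
    (h1 : SimpleDesignExists 4 17 5 13)
    (h2 : SimpleDesignExists 4 17 7 264)
    (h3 : SimpleDesignExists 4 17 8 320)
    (h4 : SimpleDesignExists 4 18 5 14)
    (h5 : SimpleDesignExists 4 18 7 336)
    (h6 : SimpleDesignExists 4 18 8 448)
    : SimpleDesignExists 4 35 8 15680 :=
  designExists_4_35_8_general h2 h3 h5 h6
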